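/- arXiv:2402.09968 — 10 statements merged into one kernel-verified Lean document; each statement's English description precedes it below -/
import Mathlib

section
/- Let A be a commutative unitary ring and a,u,v,b ∈ A with uv-1 invertible. Then M_4(a,u,v,b) = M_3(a+(1-v)(uv-1)^{-1}, uv-1, b+(1-u)(uv-1)^{-1}). -/
open Matrix

def matM {A : Type*} [CommRing A] (x : A) : Matrix (Fin 2) (Fin 2) A := !![x, -1; 1, 0]

def Mn {A : Type*} [CommRing A] {n : ℕ} (a : Fin n → A) : Matrix (Fin 2) (Fin 2) A :=
  ((List.ofFn fun i => matM (a i)).reverse).prod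

theorem stmt2 {A : Type*} [CommRing A] (a u v b : A) (h : IsUnit (u * v - 1)) :
    matM b * matM v * matM u * matM a =
      matM (b + (1 - u) * Ring.inverse (u * v - 1)) * matM (u * v - 1) *
        matM (a + (1 - v) * Ring.inverse (u * v - 1)) := by
  have hw : (u * v - 1) * Ring.inverse (u * v - 1) = 1 := Ring.mul_inverse_cancel _ h
  set w := Ring.inverse (u * v - 1) with hwdef
  ext i j
  fin_cases i <;> fin_cases j <;>
    simp [matM, Matrix.mul_apply, Fin.sum_univ_succ]
  · linear_combination ((-(1 - u) * (1 - v)) * w + (a * u + b * v - a - b - 1)) * hw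
  · linear_combination (1 - u) * hw
  · linear_combination (v - 1) * hw
  · ring
end

section
/- Let A be a commutative unitary ring and a,u,v,b,c ∈ A with v invertible and x := ((vb-1)(uv-1)-1)v^{-1} invertible. Then M_5(a,u,v,b,c) = M_3(a-(vb-2)x^{-1}, x, c-(uv-2)x^{-1}). -/
open Matrix

theorem stmt3 {A : Type*} [CommRing A] (a u v b c : A) (hv : IsUnit v)
    (hx : IsUnit (((v * b - 1) * (u * v - 1) - 1) * Ring.inverse v)) :
    matM c * matM b * matM v * matM u * matM a =
      matM (c - (u * v - 2) * Ring.inverse (((v * b - 1) * (u * v - 1) - 1) * Ring.inverse v)) *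
        matM (((v * b - 1) * (u * v - 1) - 1) * Ring.inverse v) *
        matM (a - (v * b - 2) * Ring.inverse (((v * b - 1) * (u * v - 1) - 1) * Ring.inverse v)) := by
  have hvw : v * Ring.inverse v = 1 := Ring.mul_inverse_cancel v hv
  have hxy : (((v * b - 1) * (u * v - 1) - 1) * Ring.inverse v) *
      Ring.inverse (((v * b - 1) * (u * v - 1) - 1) * Ring.inverse v) = 1 :=
    Ring.mul_inverse_cancel _ hx
  set w := Ring.inverse v with hw
  set y := Ring.inverse (((v * b - 1) * (u * v - 1) - 1) * w) with hy
  ext i j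
  fin_cases i <;> fin_cases j <;>
    simp [matM, Matrix.mul_apply, Fin.sum_univ_succ]
  · linear_combination (y * ((v * b - 1) * (u * v - 1) - 1) - c * a * (u * v * b - b - u)) * hvw +
      (c * (v * b - 2) + a * (u * v - 2) - (u * v - 2) * (v * b - 2) * y - v) * hxy
  · linear_combination c * (u * v * b - b - u) * hvw - (u * v - 2) * hxy
  · linear_combination a * (b + u - b * u * v) * hvw + (v * b - 2) * hxy
  · linear_combination (b * u * v - b - u) * hvw
end

section
/- Let A be a commutative unitary ring, n = 2l ≥ 4 even, λ a unit of A, and ε ∈ {1,-1}. If M_n(a_1,...,a_n) = ε·Id, then M_n(λa_1, λ^{-1}a_2, λa_3, λ^{-1}a_4, ..., λa_{2l-1}, λ^{-1}a_{2l}) = ε·Id. -/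
open Matrix

lemma Mn_succ_succ {A : Type*} [CommRing A] {n : ℕ} (a : Fin (n + 2) → A) :
    Mn a = Mn (fun i => a i.succ.succ) * matM (a 1) * matM (a 0) := by
  simp [Mn, List.ofFn_succ, mul_assoc, Fin.succ]

lemma key {A : Type*} [CommRing A] (lam : Aˣ) (x y : A) :
    !![(1 : A), 0; 0, (lam⁻¹ : Aˣ)] * (matM (((lam⁻¹ : Aˣ) : A) * y) * matM ((lam : A) * x))
      = matM y * (matM x * !![(1 : A), 0; 0, (lam⁻¹ : Aˣ)]) := by
  have h1 : ((lam⁻¹ : Aˣ) : A) * (lam : A) = 1 := by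
    rw [← Units.val_mul, inv_mul_cancel, Units.val_one]
  ext i j
  fin_cases i <;> fin_cases j <;>
    simp [matM, Matrix.mul_apply, Fin.sum_univ_two]
  all_goals ring_nf
  all_goals simp [mul_comm, mul_assoc, mul_left_comm, h1]

lemma aux {A : Type*} [CommRing A] (lam : Aˣ) :
    ∀ (n : ℕ), Even n → ∀ (a : Fin n → A),
    Mn (fun i => if (i : ℕ) % 2 = 0 then (lam : A) * a i else ((lam⁻¹ : Aˣ) : A) * a i) =
      (lam : A) • (!![((lam⁻¹ : Aˣ) : A), 0; 0, 1] * Mn a * !![(1 : A), 0; 0, (lam⁻¹ : Aˣ)]) := by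
  intro n
  induction n using Nat.strong_induction_on with
  | _ n ih =>
    match n with
    | 0 =>
      intro _ a
      have h1 : ((lam : A)) * ((lam⁻¹ : Aˣ) : A) = 1 := by
        rw [← Units.val_mul, mul_inv_cancel, Units.val_one]
      have : Mn (fun i : Fin 0 => if (i : ℕ) % 2 = 0 then (lam : A) * a i
          else ((lam⁻¹ : Aˣ) : A) * a i) = 1 := by simp [Mn]
      rw [this]
      have : Mn a = 1 := by simp [Mn]
      rw [this]
      ext i j
      fin_cases i <;> fin_cases j <;>
        simp [Matrix.mul_apply, Fin.sum_univ_two, Matrix.one_apply, h1]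
    | 1 => intro h; exact absurd h (by decide)
    | (m + 2) =>
      intro hEven a
      have hm : Even m := by
        rcases hEven with ⟨k, hk⟩
        exact ⟨k - 1, by omega⟩
      rw [Mn_succ_succ a, Mn_succ_succ]
      have e0 : ((0 : Fin (m + 2)) : ℕ) % 2 = 0 := by simp
      have e1 : ((1 : Fin (m + 2)) : ℕ) % 2 = 1 := by
        simp [Fin.val_one]
      have hsucc : (fun i : Fin m =>
          if (((i.succ.succ : Fin (m+2))) : ℕ) % 2 = 0 then (lam : A) * a i.succ.succ
            else ((lam⁻¹ : Aˣ) : A) * a i.succ.succ)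
          = (fun i : Fin m => if (i : ℕ) % 2 = 0 then (lam : A) * (fun j : Fin m => a j.succ.succ) i
            else ((lam⁻¹ : Aˣ) : A) * (fun j : Fin m => a j.succ.succ) i) := by
        funext i
        have : ((i.succ.succ : Fin (m+2)) : ℕ) % 2 = (i : ℕ) % 2 := by
          simp [Fin.val_succ]; omega
        rw [this]
      simp only [hsucc, e0, e1]
      rw [ih m (by omega) hm (fun j => a j.succ.succ)]
      simp only [smul_mul_assoc, mul_assoc, reduceIte, one_ne_zero, if_false, if_true]
      rw [key lam (a 0) (a 1)]

theorem stmt4 {A : Type*} [CommRing A] (l : ℕ) (hl : 2 ≤ l) (lam : Aˣ)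
    (ε : A) (hε : ε = 1 ∨ ε = -1) (a : Fin (2 * l) → A)
    (h : Mn a = ε • (1 : Matrix (Fin 2) (Fin 2) A)) :
    Mn (fun i => if (i : ℕ) % 2 = 0 then (lam : A) * a i else ((lam⁻¹ : Aˣ) : A) * a i) =
      ε • (1 : Matrix (Fin 2) (Fin 2) A) := by
  rw [aux lam (2 * l) ⟨l, by ring⟩ a, h]
  have h1 : ((lam : A)) * ((lam⁻¹ : Aˣ) : A) = 1 := by
    rw [← Units.val_mul, mul_inv_cancel, Units.val_one]
  ext i j
  fin_cases i <;> fin_cases j <;>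
    simp [Matrix.mul_apply, Fin.sum_univ_two, Matrix.one_apply, Matrix.smul_apply]
  all_goals linear_combination (norm := ring) ε * h1
end

section
/- For m ≥ 2, the number of pairs (x,y) of non-invertible elements of Z/2^m Z with xy = 0 equals m·2^{m-1}. -/
open Matrix

/-!
In a finite commutative ring a solution of `x * y = 0` with a unit factor is `(u, 0)` or `(0, u)`,
so the pairs of non-units with product zero are all solutions of `x * y = 0` less `2 · #units`.
In `ZMod n` the solutions `y` of `x * y = 0` form the kernel of `y ↦ x.val • y` on a cyclic group,
of size `gcd n x.val`. For `n = 2 ^ m`, splitting the residues by parity gives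
`∑_{a < 2^m} gcd (2^m) a = (m + 2) 2^(m-1)`, while `#units = φ (2^m) = 2^(m-1)`.
-/

open Finset

section ZeroDivisorPairs

variable {R : Type*} [CommRing R] [Fintype R] [DecidableEq R]

theorem card_nonunit_pairs_mul_eq_zero_add_two_mul_card_units [Nontrivial R] :
    #{p : R × R | ¬IsUnit p.1 ∧ ¬IsUnit p.2 ∧ p.1 * p.2 = 0} + 2 * Fintype.card Rˣ =
      #{p : R × R | p.1 * p.2 = 0} := by
  set left : Finset (R × R) := univ.image fun u : Rˣ => ((u : R), 0)
  set right : Finset (R × R) := univ.image fun u : Rˣ => (0, (u : R))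
  have hunits : ({p : R × R | p.1 * p.2 = 0 ∧ (IsUnit p.1 ∨ IsUnit p.2)} : Finset _) =
      left ∪ right := by
    ext ⟨x, y⟩
    simp only [left, right, mem_filter, mem_univ, true_and, mem_union, mem_image, Prod.mk.injEq]
    constructor
    · rintro ⟨hxy, ⟨u, rfl⟩ | ⟨u, rfl⟩⟩
      · exact Or.inl ⟨u, rfl, (u.isUnit.mul_right_eq_zero.mp hxy).symm⟩
      · exact Or.inr ⟨u, (u.isUnit.mul_left_eq_zero.mp hxy).symm, rfl⟩
    · rintro (⟨u, rfl, rfl⟩ | ⟨u, rfl, rfl⟩)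
      · exact ⟨mul_zero _, Or.inl u.isUnit⟩
      · exact ⟨zero_mul _, Or.inr u.isUnit⟩
  have hdisj : Disjoint left right := by
    simp only [left, right, disjoint_left, mem_image, mem_univ, true_and]
    rintro _ ⟨u, rfl⟩ ⟨v, hv⟩
    exact u.ne_zero (congrArg Prod.fst hv).symm
  have hinj : ∀ f : R → R × R, f.Injective → #(univ.image fun u : Rˣ => f u) = Fintype.card Rˣ :=
    fun f hf => card_image_of_injective _ (hf.comp Units.val_injective)
  have hnonunits : ({p : R × R | p.1 * p.2 = 0 ∧ ¬(IsUnit p.1 ∨ IsUnit p.2)} : Finset (R × R)) =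
      ({p : R × R | ¬IsUnit p.1 ∧ ¬IsUnit p.2 ∧ p.1 * p.2 = 0} : Finset (R × R)) :=
    filter_congr fun p _ => by tauto
  rw [← card_filter_add_card_filter_not (s := {p : R × R | p.1 * p.2 = 0})
    (fun p : R × R => IsUnit p.1 ∨ IsUnit p.2), filter_filter, filter_filter, hunits, hnonunits,
    card_union_of_disjoint hdisj, hinj _ (Prod.mk_left_injective 0),
    hinj _ (Prod.mk_right_injective 0)]
  ring

theorem card_pairs_mul_eq_zero_eq_sum :
    #{p : R × R | p.1 * p.2 = 0} = ∑ x : R, #{y : R | x * y = 0} := by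
  simp only [card_filter, Fintype.sum_prod_type]

end ZeroDivisorPairs

theorem ZMod.card_mul_eq_zero_eq_gcd (n : ℕ) [NeZero n] (x : ZMod n) :
    #{y : ZMod n | x * y = 0} = n.gcd x.val := by
  have hker := IsAddCyclic.card_nsmulAddMonoidHom_ker (ZMod n) x.val
  rw [Nat.card_zmod] at hker
  rw [← hker, ← Fintype.card_subtype, ← Nat.card_eq_fintype_card]
  refine Nat.card_congr (Equiv.subtypeEquivRight fun y => ?_)
  rw [AddMonoidHom.mem_ker, nsmulAddMonoidHom_apply, nsmul_eq_mul, ZMod.natCast_zmod_val]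

theorem ZMod.sum_comp_val {M : Type*} [AddCommMonoid M] (n : ℕ) [NeZero n] (f : ℕ → M) :
    ∑ x : ZMod n, f x.val = ∑ a ∈ range n, f a :=
  sum_nbij' ZMod.val Nat.cast (fun x _ => mem_range.mpr (ZMod.val_lt x)) (fun _ _ => mem_univ _)
    (fun x _ => ZMod.natCast_zmod_val x) (fun _ ha => ZMod.val_cast_of_lt (mem_range.mp ha))
    fun _ _ => rfl

theorem sum_range_two_mul {M : Type*} [AddCommMonoid M] (f : ℕ → M) (n : ℕ) :
    ∑ i ∈ range (2 * n), f i = ∑ i ∈ range n, (f (2 * i) + f (2 * i + 1)) := by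
  induction n with
  | zero => simp
  | succ n ih => rw [mul_add, mul_one, sum_range_succ, sum_range_succ, sum_range_succ, ih, add_assoc]

theorem two_mul_sum_range_gcd_two_pow (m : ℕ) :
    2 * ∑ a ∈ range (2 ^ m), (2 ^ m).gcd a = (m + 2) * 2 ^ m := by
  induction m with
  | zero => simp
  | succ m ih =>
    have heven (b : ℕ) : (2 ^ (m + 1)).gcd (2 * b) = 2 * (2 ^ m).gcd b := by
      rw [pow_succ', Nat.gcd_mul_left]
    have hodd (b : ℕ) : (2 ^ (m + 1)).gcd (2 * b + 1) = 1 :=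
      Nat.Coprime.pow_left _ (by simp)
    rw [pow_succ', sum_range_two_mul, ← pow_succ']
    simp only [heven, hodd, sum_add_distrib, ← mul_sum, sum_const, card_range, smul_eq_mul, mul_one]
    rw [pow_succ]
    linear_combination 2 * ih

theorem ZMod.card_pairs_mul_eq_zero (n : ℕ) [NeZero n] :
    #{p : ZMod n × ZMod n | p.1 * p.2 = 0} = ∑ a ∈ range n, n.gcd a := by
  simp only [card_pairs_mul_eq_zero_eq_sum, ZMod.card_mul_eq_zero_eq_gcd,
    ZMod.sum_comp_val n (n.gcd ·)]

theorem stmt6 (m : ℕ) (hm : 2 ≤ m) :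
    Nat.card {p : ZMod (2 ^ m) × ZMod (2 ^ m) //
      ¬IsUnit p.1 ∧ ¬IsUnit p.2 ∧ p.1 * p.2 = 0} = m * 2 ^ (m - 1) := by
  have : Fact (1 < 2 ^ m) := ⟨Nat.one_lt_two_pow (by omega)⟩
  have hunits : Fintype.card (ZMod (2 ^ m))ˣ = 2 ^ (m - 1) := by
    rw [ZMod.card_units_eq_totient, Nat.totient_prime_pow Nat.prime_two (by omega)]
    norm_num
  have hpairs := card_nonunit_pairs_mul_eq_zero_add_two_mul_card_units (R := ZMod (2 ^ m))
  have hgcd := two_mul_sum_range_gcd_two_pow m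
  rw [hunits, ZMod.card_pairs_mul_eq_zero] at hpairs
  rw [← hpairs] at hgcd
  have hpow : 2 ^ m = 2 * 2 ^ (m - 1) := by rw [← pow_succ']; congr 1; omega
  rw [Nat.card_eq_fintype_card, Fintype.card_subtype]
  linarith [congrArg (m * ·) hpow]
end

section
/- For m ≥ 2, the number of 4-tuples (a_1,a_2,a_3,a_4) in (Z/2^m Z)^4 with M_4(a_1,a_2,a_3,a_4) = -Id equals 2^m. -/
/-!
Multiplying out, `M_4(a) = -1` says exactly `a₂ = a₀`, `a₃ = a₁` and `a₀ a₁ = 2`. In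
`ZMod (2 ^ m)` with `m ≥ 2` the element `2` is not a unit, and in every factorisation `2 = x y`
one factor is a unit, since two non-units are both even and their product is divisible by `4`.
So the solutions are `(u, 2 u⁻¹)` and `(2 u⁻¹, u)` for units `u`: `2 φ(2 ^ m) = 2 ^ m` of them.
-/

open Matrix

section Continuant

variable {A : Type*} [CommRing A]

theorem Mn_fin_four (a : Fin 4 → A) :
    Mn a = !![a 3 * (a 2 * (a 1 * a 0 - 1) - a 0) - (a 1 * a 0 - 1), a 3 * (1 - a 2 * a 1) + a 1;
              a 2 * (a 1 * a 0 - 1) - a 0, 1 - a 2 * a 1] := by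
  have h : Mn a = matM (a 3) * (matM (a 2) * (matM (a 1) * matM (a 0))) := by
    simp [Mn, List.ofFn_succ, show (Fin.succ 2 : Fin 4) = 3 from rfl]
  rw [h]
  simp only [matM, mul_fin_two, EmbeddingLike.apply_eq_iff_eq, vecCons_inj, and_true]
  refine ⟨⟨?_, ?_⟩, ?_, ?_⟩ <;> ring

theorem Mn_fin_four_eq_neg_one_iff (a : Fin 4 → A) :
    Mn a = -1 ↔ a 2 = a 0 ∧ a 3 = a 1 ∧ a 0 * a 1 = 2 := by
  rw [Mn_fin_four, one_fin_two]
  simp only [neg_of, neg_cons, neg_zero, neg_empty, EmbeddingLike.apply_eq_iff_eq, vecCons_inj,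
    and_true]
  constructor
  · rintro ⟨⟨h00, h01⟩, h10, h11⟩
    have hprod : a 0 * a 1 = 2 := by linear_combination -h00 + a 3 * h10
    refine ⟨?_, ?_, hprod⟩
    · linear_combination h10 - a 2 * hprod
    · linear_combination -h01 + a 3 * h11
  · rintro ⟨h2, h3, hprod⟩
    rw [h2, h3]
    refine ⟨⟨?_, ?_⟩, ?_, ?_⟩
    · linear_combination (a 0 * a 1 - 1) * hprod
    · linear_combination -a 1 * hprod
    · linear_combination a 0 * hprod
    · linear_combination -hprod

def mnFinFourEqNegOneEquiv :
    {a : Fin 4 → A // Mn a = -1} ≃ {p : A × A // p.1 * p.2 = 2} where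
  toFun a := ⟨(a.1 0, a.1 1), ((Mn_fin_four_eq_neg_one_iff a.1).mp a.2).2.2⟩
  invFun p := ⟨![p.1.1, p.1.2, p.1.1, p.1.2], (Mn_fin_four_eq_neg_one_iff _).mpr ⟨rfl, rfl, p.2⟩⟩
  left_inv a := by
    obtain ⟨h2, h3, -⟩ := (Mn_fin_four_eq_neg_one_iff a.1).mp a.2
    ext i
    fin_cases i <;> simp [h2, h3]
  right_inv _ := rfl

end Continuant

section Monoid

variable {M : Type*} [CommMonoid M] {c : M}

noncomputable def factorisationsEquivUnitsSumUnits (hc : ¬IsUnit c)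
    (h : ∀ x y : M, x * y = c → IsUnit x ∨ IsUnit y) :
    {p : M × M // p.1 * p.2 = c} ≃ Mˣ ⊕ Mˣ := by
  refine (Equiv.ofBijective (fun s : Mˣ ⊕ Mˣ => match s with
    | .inl u => (⟨(u, ↑u⁻¹ * c), u.mul_inv_cancel_left c⟩ : {p : M × M // p.1 * p.2 = c})
    | .inr u => ⟨(↑u⁻¹ * c, u), by rw [mul_comm]; exact u.mul_inv_cancel_left c⟩)
    ⟨?_, ?_⟩).symm
  · rintro (u | u) (v | v) huv <;> simp only [Subtype.mk.injEq, Prod.mk.injEq] at huv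
    · exact congrArg Sum.inl (Units.ext huv.1)
    · exact (hc (by rw [← v.mul_inv_cancel_left c, ← huv.1]; exact (v * u).isUnit)).elim
    · exact (hc (by rw [← u.mul_inv_cancel_left c, huv.1]; exact (u * v).isUnit)).elim
    · exact congrArg Sum.inr (Units.ext huv.2)
  · rintro ⟨⟨x, y⟩, hxy⟩
    rcases h x y hxy with ⟨u, rfl⟩ | ⟨u, rfl⟩
    · exact ⟨.inl u, by simp [← hxy]⟩
    · exact ⟨.inr u, by simp [← hxy, mul_comm x]⟩

theorem card_factorisations_eq_two_mul_card_units [Finite M] (hc : ¬IsUnit c)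
    (h : ∀ x y : M, x * y = c → IsUnit x ∨ IsUnit y) :
    Nat.card {p : M × M // p.1 * p.2 = c} = 2 * Nat.card Mˣ := by
  rw [Nat.card_congr (factorisationsEquivUnitsSumUnits hc h), Nat.card_sum, two_mul]

end Monoid

namespace ZMod

variable {p m : ℕ} [Fact p.Prime]

theorem prime_dvd_of_not_isUnit (hm : 0 < m) {x : ZMod (p ^ m)} (hx : ¬IsUnit x) :
    (p : ZMod (p ^ m)) ∣ x := by
  have : NeZero (p ^ m) := ⟨pow_ne_zero _ (Fact.out : p.Prime).ne_zero⟩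
  rw [← natCast_zmod_val x, isUnit_natCast_iff_not_dvd_pow Fact.out hm, not_not] at hx
  rw [← natCast_zmod_val x]
  exact Nat.cast_dvd_cast hx

theorem isUnit_or_isUnit_of_mul_eq_prime (hm : 2 ≤ m) {x y : ZMod (p ^ m)}
    (hxy : x * y = p) : IsUnit x ∨ IsUnit y := by
  by_contra! h
  obtain ⟨x', rfl⟩ := prime_dvd_of_not_isUnit (by omega) h.1
  obtain ⟨y', rfl⟩ := prime_dvd_of_not_isUnit (by omega) h.2
  let φ := castHom (pow_dvd_pow p hm) (ZMod (p ^ 2))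
  have hsq : (p : ZMod (p ^ 2)) ^ 2 = 0 := by exact_mod_cast natCast_self (p ^ 2)
  have hp : (p : ZMod (p ^ 2)) = 0 := by
    rw [← map_natCast φ, ← hxy]
    simp only [map_mul, map_natCast]
    linear_combination (φ x' * φ y') * hsq
  rw [natCast_eq_zero_iff] at hp
  have := (Fact.out : p.Prime).two_le
  have := Nat.le_of_dvd (by omega) hp
  nlinarith

end ZMod

theorem stmt8 (m : ℕ) (hm : 2 ≤ m) :
    Nat.card {a : Fin 4 → ZMod (2 ^ m) //
      Mn a = (-1 : Matrix (Fin 2) (Fin 2) (ZMod (2 ^ m)))} = 2 ^ m := by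
  have : NeZero (2 ^ m) := ⟨by positivity⟩
  have : Fact (Nat.Prime 2) := ⟨Nat.prime_two⟩
  have htwo : ¬IsUnit (2 : ZMod (2 ^ m)) := by
    exact_mod_cast ZMod.prime_natCast_not_isUnit_pow Nat.prime_two (by omega)
  have hunits : 2 * Nat.card (ZMod (2 ^ m))ˣ = 2 ^ m := by
    rw [Nat.card_eq_fintype_card, ZMod.card_units_eq_totient,
      Nat.totient_prime_pow Nat.prime_two (by omega), Nat.add_one_sub_one, mul_one, ← pow_succ',
      Nat.sub_add_cancel (by omega)]
  have hfactor : ∀ x y : ZMod (2 ^ m), x * y = 2 → IsUnit x ∨ IsUnit y := fun _ _ hxy =>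
    ZMod.isUnit_or_isUnit_of_mul_eq_prime hm (by exact_mod_cast hxy)
  rw [Nat.card_congr mnFinFourEqNegOneEquiv,
    card_factorisations_eq_two_mul_card_units htwo hfactor, hunits]
end

section
/- Over Z/2^m Z with m ≥ 2, the solutions (a_1,a_2,a_3,a_4) of M_4(a_1,a_2,a_3,a_4) = Id are exactly the 4-tuples of the form (-y, x, y, -x) with xy = 0. -/
/-!
Split `M_4 = P * Q` with `P = M(a_4) M(a_3)` and `Q = M(a_2) M(a_1)`. A product of two factors is
`M(x) M(y) = [[xy - 1, -x], [y, -1]]`, of determinant one with the explicit inverse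
`[[-1, x], [-y, xy - 1]]`. Hence `M_4 = 1` iff `P = Q⁻¹`, and comparing entries gives
`a_4 = -a_2`, `a_3 = -a_1`, `a_3 a_4 = a_1 a_2 = 0`.
-/

open Matrix

section

variable {A : Type*} [CommRing A]

theorem Mn_four (a : Fin 4 → A) :
    Mn a = matM (a 3) * matM (a 2) * (matM (a 1) * matM (a 0)) := by
  simp [Mn, List.ofFn_succ, mul_assoc]

theorem matM_mul_matM (x y : A) : matM x * matM y = !![x * y - 1, -x; y, -1] := by
  simp [matM, sub_eq_add_neg]

theorem matM_mul_matM_mul_eq_one (x y : A) :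
    matM x * matM y * !![-1, x; -y, x * y - 1] = 1 := by
  rw [matM_mul_matM, mul_fin_two, one_fin_two]
  congr 1
  ring_nf

theorem Mn_four_eq_one_iff (a : Fin 4 → A) :
    Mn a = 1 ↔ a 3 * a 2 = 0 ∧ a 3 = -a 1 ∧ a 2 = -a 0 ∧ a 1 * a 0 = 0 := by
  have hright := matM_mul_matM_mul_eq_one (a 1) (a 0)
  have hleft := mul_eq_one_comm.mp hright
  rw [Mn_four]
  trans matM (a 3) * matM (a 2) = !![-1, a 1; -a 0, a 1 * a 0 - 1]
  · exact ⟨fun h => left_inv_eq_right_inv h hright, fun h => h ▸ hleft⟩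
  rw [matM_mul_matM, ← Matrix.ext_iff]
  simp [Fin.forall_fin_two, neg_eq_iff_eq_neg, eq_comm (a := (-1 : A)), and_assoc]

theorem Mn_four_eq_one_iff_exists (a : Fin 4 → A) :
    Mn a = 1 ↔ ∃ x y : A, x * y = 0 ∧ a = ![-y, x, y, -x] := by
  rw [Mn_four_eq_one_iff]
  constructor
  · rintro ⟨h32, h31, h20, -⟩
    refine ⟨a 1, a 2, by simpa [h31] using h32, ?_⟩
    ext i
    fin_cases i <;> simp [h31, h20]
  · rintro ⟨x, y, hxy, rfl⟩
    simp [hxy]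

end

theorem stmt9_general (m : ℕ) :
    {a : Fin 4 → ZMod (2 ^ m) | Mn a = (1 : Matrix (Fin 2) (Fin 2) (ZMod (2 ^ m)))} =
      {a | ∃ x y : ZMod (2 ^ m), x * y = 0 ∧ a = ![-y, x, y, -x]} := by
  ext a
  exact Mn_four_eq_one_iff_exists a

theorem stmt9 (m : ℕ) (hm : 2 ≤ m) :
    {a : Fin 4 → ZMod (2 ^ m) | Mn a = (1 : Matrix (Fin 2) (Fin 2) (ZMod (2 ^ m)))} =
      {a | ∃ x y : ZMod (2 ^ m), x * y = 0 ∧ a = ![-y, x, y, -x]} :=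
  stmt9_general m
end

section
/- Let m ≥ 2, B ∈ SL_2(Z/2^m Z), and n > 4. Define Δ_n^B(m) as the set of n-tuples (a_1,...,a_n) in (Z/2^m Z)^n with M_n(a_1,...,a_n) = B and a_2 invertible. Then |Δ_n^B(m)| = 2^{m-1}|Δ_{n-1}^B(m)| + 2^{2m-1}|Δ_{n-2}^B(m)|. -/
/-!
Write `N_n(B) = |Δ_n^B(m)|` over a finite commutative local ring `R` with `q` elements, `u` of
them units and `v = q - u` non-units. Splitting off the last factor of `M_n` gives
`N_{n+1}(B) = ∑_x N_n(M(x)⁻¹ B)`, and `(M(x)⁻¹ B)₁₁ = x B₁₁ - B₀₁`. For `n ≥ 3` and `det B = 1`,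
`N_n(B)` depends only on whether `B₁₁` is a unit: `N_3(B) = [B₁₁ unit]`, and if `N_n` takes the
values `(t, e)` then `N_{n+1}` takes `(u t + v e, q t)`. Indeed, when `B₁₁` is a unit,
`x ↦ x B₁₁ - B₀₁` is a bijection of `R`; when it is not, `det B = 1` makes `B₀₁` a unit, and then
so is every `x B₁₁ - B₀₁` because `R` is local. The map `(t, e) ↦ (u t + v e, q t)` satisfies
`X² = u X + v q`, which is the recurrence; for `R = ℤ/2^m` we have `u = v = 2^(m-1)`.
-/

open Matrix

theorem Nat.card_subtype_eq_sum_snoc {α : Type*} [Fintype α] {n : ℕ}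
    (P : (Fin (n + 1) → α) → Prop) :
    Nat.card {a // P a} = ∑ x, Nat.card {b : Fin n → α // P (Fin.snoc b x)} := by
  rw [← Nat.card_sigma]
  exact Nat.card_congr (((Fin.snocEquiv fun _ => α).symm.subtypeEquiv fun a => by simp).trans
    (Equiv.subtypeProdEquivSigmaSubtype fun x b => P (Fin.snoc b x)))

theorem Fintype.sum_comp_mul_sub_of_isUnit {R M : Type*} [Ring R] [Fintype R] [AddCommMonoid M]
    {b : R} (hb : IsUnit b) (c : R) (f : R → M) : ∑ x, f (x * b - c) = ∑ x, f x :=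
  Fintype.sum_equiv (hb.unit.mulRight.trans (Equiv.subRight c)) _ _ fun _ => rfl

open Classical in
theorem Fintype.sum_ite_isUnit {R : Type*} [Monoid R] [Fintype R] (t e : ℕ) :
    ∑ x : R, (if IsUnit x then t else e) = Nat.card Rˣ * t + (Nat.card R - Nat.card Rˣ) * e := by
  have hunits : Nat.card Rˣ = (Finset.univ.filter (IsUnit : R → Prop)).card := by
    rw [← Fintype.card_subtype, ← Nat.card_eq_fintype_card]
    exact Nat.card_congr Submonoid.unitsTypeEquivIsUnitSubmonoid.toEquiv
  have hsplit := Finset.card_filter_add_card_filter_not (s := Finset.univ) (IsUnit : R → Prop)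
  rw [Finset.card_univ] at hsplit
  rw [Finset.sum_ite, Finset.sum_const, Finset.sum_const, smul_eq_mul, smul_eq_mul, hunits,
    Nat.card_eq_fintype_card, ← hsplit, Nat.add_sub_cancel_left]

theorem IsLocalRing.isUnit_add_iff_of_not_isUnit {R : Type*} [Ring R] [IsLocalRing R] {a : R}
    (ha : ¬IsUnit a) (b : R) : IsUnit (a + b) ↔ IsUnit b := by
  refine ⟨fun h => (isUnit_or_isUnit_of_isUnit_add h).resolve_left ha, fun hb => ?_⟩
  by_contra h
  have hna : -a ∈ nonunits R := fun h' => ha (by simpa using h'.neg)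
  exact nonunits_add h hna (by simpa using hb)

theorem Matrix.isUnit_apply_zero_one_of_det_eq_one {R : Type*} [CommRing R] [IsLocalRing R]
    {B : Matrix (Fin 2) (Fin 2) R} (hB : B.det = 1) (h11 : ¬IsUnit (B 1 1)) : IsUnit (B 0 1) := by
  rw [det_fin_two, sub_eq_add_neg] at hB
  have : IsUnit (-(B 0 1 * B 1 0)) := by
    rw [← IsLocalRing.isUnit_add_iff_of_not_isUnit
      (fun h => h11 (isUnit_of_mul_isUnit_right h)), hB]
    exact isUnit_one
  exact isUnit_of_mul_isUnit_left ((IsUnit.neg_iff _).mp this)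

theorem ZMod.isLocalRing_pow {p m : ℕ} [hp : Fact p.Prime] (hm : m ≠ 0) :
    IsLocalRing (ZMod (p ^ m)) :=
  have : Fact (1 < p ^ m) := ⟨Nat.one_lt_pow hm hp.out.one_lt⟩
  IsLocalRing.of_surjective' (PadicInt.toZModPow m) (ZMod.ringHom_surjective _)

theorem ZMod.card_units_two_pow {m : ℕ} (hm : m ≠ 0) : Nat.card (ZMod (2 ^ m))ˣ = 2 ^ (m - 1) := by
  have : NeZero (2 ^ m) := ⟨by positivity⟩
  rw [Nat.card_eq_fintype_card, ZMod.card_units_eq_totient,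
    Nat.totient_prime_pow Nat.prime_two (Nat.pos_of_ne_zero hm)]
  simp

section

variable {R : Type*} [CommRing R]

def matMInv (x : R) : Matrix (Fin 2) (Fin 2) R := !![0, 1; -1, x]

theorem matM_mul_matMInv (x : R) : matM x * matMInv x = 1 := by
  simp [matM, matMInv, one_fin_two]

theorem matMInv_mul_matM (x : R) : matMInv x * matM x = 1 := by
  simp [matM, matMInv, one_fin_two]

theorem det_matMInv_mul (x : R) (B : Matrix (Fin 2) (Fin 2) R) : (matMInv x * B).det = B.det := by
  rw [det_mul, matMInv, det_fin_two_of]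
  ring

theorem matMInv_mul_apply_zero_one (x : R) (B : Matrix (Fin 2) (Fin 2) R) :
    (matMInv x * B) 0 1 = B 1 1 := by
  simp [matMInv, mul_apply, Fin.sum_univ_two]

theorem matMInv_mul_apply_one_one (x : R) (B : Matrix (Fin 2) (Fin 2) R) :
    (matMInv x * B) 1 1 = x * B 1 1 - B 0 1 := by
  simp [matMInv, mul_apply, Fin.sum_univ_two]
  ring

theorem Mn_snoc {n : ℕ} (b : Fin n → R) (x : R) : Mn (Fin.snoc b x) = matM x * Mn b := by
  rw [Mn, List.ofFn_succ', List.concat_eq_append, List.reverse_append]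
  simp [Mn]

theorem Mn_snoc_eq_iff {n : ℕ} (b : Fin n → R) (x : R) (B : Matrix (Fin 2) (Fin 2) R) :
    Mn (Fin.snoc b x) = B ↔ Mn b = matMInv x * B := by
  rw [Mn_snoc]
  constructor
  · rintro rfl
    rw [← mul_assoc, matMInv_mul_matM, one_mul]
  · intro h
    rw [h, ← mul_assoc, matM_mul_matMInv, one_mul]

theorem Mn_two (a : Fin 2 → R) : Mn a = !![a 1 * a 0 - 1, -a 1; a 0, -1] := by
  simp [Mn, List.ofFn_succ, matM, sub_eq_add_neg]

end

/-- `deltaCard R n B = |Δ_{n+2}^B|`; the shift keeps the index of `a_2` in range. -/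
noncomputable def deltaCard (R : Type*) [CommRing R] (n : ℕ) (B : Matrix (Fin 2) (Fin 2) R) : ℕ :=
  Nat.card {a : Fin (n + 2) → R // Mn a = B ∧ IsUnit (a ⟨1, by omega⟩)}

section

open Classical

variable {R : Type*} [CommRing R]

theorem deltaCard_succ [Fintype R] (n : ℕ) (B : Matrix (Fin 2) (Fin 2) R) :
    deltaCard R (n + 1) B = ∑ x, deltaCard R n (matMInv x * B) := by
  rw [deltaCard, Nat.card_subtype_eq_sum_snoc]
  congr! with x
  simp only [Mn_snoc_eq_iff]
  rfl

theorem deltaCard_zero {B : Matrix (Fin 2) (Fin 2) R} (hB : B.det = 1) :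
    deltaCard R 0 B = if B 1 1 = -1 ∧ IsUnit (B 0 1) then 1 else 0 := by
  have hdet : B 0 0 * B 1 1 - B 0 1 * B 1 0 = 1 := by rw [← hB, det_fin_two]
  have hsol (a : Fin 2 → R) : (Mn a = B ∧ IsUnit (a 1)) ↔
      a = ![B 1 0, -B 0 1] ∧ (B 1 1 = -1 ∧ IsUnit (B 0 1)) := by
    rw [Mn_two, ← Matrix.ext_iff, funext_iff]
    simp only [Fin.forall_fin_two, of_apply, cons_val', cons_val_zero, cons_val_one, empty_val',
      cons_val_fin_one]
    constructor
    · rintro ⟨⟨⟨-, h01⟩, h10, h11⟩, hu⟩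
      exact ⟨⟨h10, by rw [← h01, neg_neg]⟩, h11.symm, h01 ▸ hu.neg⟩
    · rintro ⟨⟨h0, h1⟩, h11, hu⟩
      refine ⟨⟨⟨?_, by rw [h1, neg_neg]⟩, h0, h11.symm⟩, h1 ▸ hu.neg⟩
      rw [h0, h1]
      linear_combination hdet - B 0 0 * h11
  rw [deltaCard]
  simp only [Fin.mk_one, hsol]
  split_ifs with h <;> simp [h]

variable [Fintype R]

theorem deltaCard_one {B : Matrix (Fin 2) (Fin 2) R} (hB : B.det = 1) :
    deltaCard R 1 B = if IsUnit (B 1 1) then 1 else 0 := by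
  have hx (x : R) : deltaCard R 0 (matMInv x * B) =
      if x * B 1 1 - B 0 1 = -1 ∧ IsUnit (B 1 1) then 1 else 0 := by
    rw [deltaCard_zero ((det_matMInv_mul x B).trans hB), matMInv_mul_apply_one_one,
      matMInv_mul_apply_zero_one]
    -- the two sides differ only in their `Decidable` instances
    congr
  simp only [deltaCard_succ, hx]
  split_ifs with hu
  · simp only [hu, and_true]
    rw [Fintype.sum_comp_mul_sub_of_isUnit hu _ fun y => if y = -1 then 1 else 0]
    simp
  · simp [hu]

variable [IsLocalRing R]

theorem deltaCard_succ_of_eq_ite {n t e : ℕ} (h : ∀ C : Matrix (Fin 2) (Fin 2) R,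
      C.det = 1 → deltaCard R n C = if IsUnit (C 1 1) then t else e)
    {B : Matrix (Fin 2) (Fin 2) R} (hB : B.det = 1) :
    deltaCard R (n + 1) B = if IsUnit (B 1 1) then Nat.card Rˣ * t + (Nat.card R - Nat.card Rˣ) * e
      else Nat.card R * t := by
  have hx (x : R) :
      deltaCard R n (matMInv x * B) = if IsUnit (x * B 1 1 - B 0 1) then t else e := by
    rw [h _ ((det_matMInv_mul x B).trans hB), matMInv_mul_apply_one_one]
  simp only [deltaCard_succ, hx]
  split_ifs with hu
  · rw [Fintype.sum_comp_mul_sub_of_isUnit hu _ fun y => if IsUnit y then t else e,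
      Fintype.sum_ite_isUnit]
  · have hunit (x : R) : IsUnit (x * B 1 1 - B 0 1) := by
      rw [sub_eq_add_neg, IsLocalRing.isUnit_add_iff_of_not_isUnit
        (fun h' => hu (isUnit_of_mul_isUnit_right h')), IsUnit.neg_iff]
      exact isUnit_apply_zero_one_of_det_eq_one hB hu
    simp [hunit, Nat.card_eq_fintype_card]

theorem exists_deltaCard_eq_ite (n : ℕ) : ∃ t e : ℕ, ∀ C : Matrix (Fin 2) (Fin 2) R,
    C.det = 1 → deltaCard R (n + 1) C = if IsUnit (C 1 1) then t else e := by
  induction n with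
  | zero => exact ⟨1, 0, fun C hC => deltaCard_one hC⟩
  | succ n ih =>
    obtain ⟨t, e, h⟩ := ih
    exact ⟨_, _, fun C hC => deltaCard_succ_of_eq_ite h hC⟩

theorem deltaCard_add_three (n : ℕ) {B : Matrix (Fin 2) (Fin 2) R} (hB : B.det = 1) :
    deltaCard R (n + 3) B = Nat.card Rˣ * deltaCard R (n + 2) B +
      (Nat.card R - Nat.card Rˣ) * Nat.card R * deltaCard R (n + 1) B := by
  obtain ⟨t, e, h⟩ := exists_deltaCard_eq_ite (R := R) n
  rw [deltaCard_succ_of_eq_ite (fun C hC => deltaCard_succ_of_eq_ite h hC) hB,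
    deltaCard_succ_of_eq_ite h hB, h B hB]
  split_ifs <;> ring

end

theorem stmt10 (m : ℕ) (hm : 2 ≤ m) (B : Matrix (Fin 2) (Fin 2) (ZMod (2 ^ m)))
    (hB : B.det = 1) (n : ℕ) (hn : 4 < n) :
    Nat.card {a : Fin n → ZMod (2 ^ m) // Mn a = B ∧ IsUnit (a ⟨1, by omega⟩)} =
      2 ^ (m - 1) * Nat.card {a : Fin (n - 1) → ZMod (2 ^ m) // Mn a = B ∧ IsUnit (a ⟨1, by omega⟩)} +
      2 ^ (2 * m - 1) *
        Nat.card {a : Fin (n - 2) → ZMod (2 ^ m) // Mn a = B ∧ IsUnit (a ⟨1, by omega⟩)} := by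
  obtain ⟨k, rfl⟩ : ∃ k, n = k + 5 := ⟨n - 5, by omega⟩
  have : NeZero (2 ^ m) := ⟨by positivity⟩
  have := ZMod.isLocalRing_pow (p := 2) (m := m) (by omega)
  have hnonunits : 2 ^ m - 2 ^ (m - 1) = 2 ^ (m - 1) := by
    rw [← Nat.two_pow_pred_add_two_pow_pred (by omega : 0 < m)]
    simp
  have hrec := deltaCard_add_three k hB
  rw [ZMod.card_units_two_pow (by omega), Nat.card_zmod, hnonunits, ← pow_add,
    show m - 1 + m = 2 * m - 1 by omega] at hrec
  exact hrec
end

section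
/- Let m ≥ 2. For ψ(u,v,w) := ((vw-1)(uv-1)-1)v^{-1} defined on U(m)×U(m)×(Z/2^m Z), and for each x ∈ U(m), the fiber T(m,x) := ψ^{-1}(x) has cardinality 2^{2m-1}. -/
open Matrix

lemma isUnit_zmod_two_pow_iff {m : ℕ} (hm : 1 ≤ m) (z : ZMod (2 ^ m)) :
    IsUnit z ↔ Odd z.val := by
  haveI : NeZero (2 ^ m) := ⟨by positivity⟩
  have hz : ((z.val : ℕ) : ZMod (2 ^ m)) = z := by
    rw [ZMod.natCast_val, ZMod.cast_id]
  conv_lhs => rw [← hz]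
  rw [ZMod.isUnit_iff_coprime, Nat.coprime_pow_right_iff (by omega), Nat.coprime_two_right]

lemma isUnit_add_one_iff {m : ℕ} (hm : 1 ≤ m) (z : ZMod (2 ^ m)) :
    IsUnit (z + 1) ↔ ¬ IsUnit z := by
  haveI : NeZero (2 ^ m) := ⟨by positivity⟩
  haveI : Fact (1 < 2 ^ m) := ⟨by
    have : 2 ^ 1 ≤ 2 ^ m := Nat.pow_le_pow_right (by norm_num) hm
    omega⟩
  rw [isUnit_zmod_two_pow_iff hm, isUnit_zmod_two_pow_iff hm, ZMod.val_add, ZMod.val_one,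
    Nat.odd_iff, Nat.odd_iff, Nat.mod_mod_of_dvd _ (dvd_pow_self 2 (by omega))]
  omega

lemma isUnit_sub_one_iff {m : ℕ} (hm : 1 ≤ m) (z : ZMod (2 ^ m)) :
    IsUnit (z - 1) ↔ ¬ IsUnit z := by
  have h := isUnit_add_one_iff hm (z - 1)
  rw [sub_add_cancel] at h
  exact iff_not_comm.mp h

noncomputable def unitsEquivIsUnit (M : Type*) [Monoid M] : Mˣ ≃ {x : M // IsUnit x} where
  toFun u := ⟨u, u.isUnit⟩
  invFun s := s.2.unit
  left_inv u := Units.ext (IsUnit.unit_spec _)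
  right_inv s := Subtype.ext s.2.unit_spec

theorem stmt11 (m : ℕ) (hm : 2 ≤ m) (x : (ZMod (2 ^ m))ˣ) :
    Nat.card {t : (ZMod (2 ^ m))ˣ × (ZMod (2 ^ m))ˣ × ZMod (2 ^ m) //
      (((t.2.1 : ZMod (2 ^ m)) * t.2.2 - 1) * ((t.1 : ZMod (2 ^ m)) * t.2.1 - 1) - 1) *
        ((t.2.1⁻¹ : (ZMod (2 ^ m))ˣ) : ZMod (2 ^ m)) = (x : ZMod (2 ^ m))} = 2 ^ (2 * m - 1) := by
  classical
  have hm1 : 1 ≤ m := by omega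
  haveI : NeZero (2 ^ m) := ⟨by positivity⟩
  set R := ZMod (2 ^ m) with hR
  set F := fun (p : {t : Rˣ × Rˣ × R //
      (((t.2.1 : R) * t.2.2 - 1) * ((t.1 : R) * t.2.1 - 1) - 1) *
        ((t.2.1⁻¹ : Rˣ) : R) = (x : R)}) =>
    ((⟨(p.1.1 : R) * p.1.2.1 - 1, by
        exact fun h => (isUnit_sub_one_iff hm1 _).mp h (p.1.1.isUnit.mul p.1.2.1.isUnit)⟩ : {s : R // ¬ IsUnit s}),
      ((p.1.2.1 : R) * p.1.2.2 - 1 : R)) with hF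
  have key : ∀ (p : {t : Rˣ × Rˣ × R //
      (((t.2.1 : R) * t.2.2 - 1) * ((t.1 : R) * t.2.1 - 1) - 1) *
        ((t.2.1⁻¹ : Rˣ) : R) = (x : R)}),
      ((p.1.2.1 : R) * p.1.2.2 - 1) * ((p.1.1 : R) * p.1.2.1 - 1) - 1
        = (x : R) * (p.1.2.1 : R) := by
    intro p
    have h := congrArg (· * (p.1.2.1 : R)) p.2
    simpa [mul_assoc, Units.inv_mul] using h
  have hbij : Function.Bijective F := by
    constructor
    · rintro ⟨⟨u₁, v₁, w₁⟩, h₁⟩ ⟨⟨u₂, v₂, w₂⟩, h₂⟩ hEq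
      rw [hF] at hEq
      simp only [Prod.mk.injEq, Subtype.mk.injEq] at hEq
      obtain ⟨hs, ht⟩ := hEq
      have k₁ := key ⟨⟨u₁, v₁, w₁⟩, h₁⟩
      have k₂ := key ⟨⟨u₂, v₂, w₂⟩, h₂⟩
      simp only at k₁ k₂ hs ht
      have hv : (v₁ : R) = v₂ := by
        refine x.mul_right_inj.mp ?_
        rw [k₁.symm, k₂.symm, hs, ht]
      have hvu : v₁ = v₂ := Units.ext hv
      have hu : u₁ = u₂ := by
        refine Units.ext ?_
        have hs' : (u₁ : R) * v₁ = (u₂ : R) * v₂ := by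
          have := sub_left_injective hs; exact this
        rw [← hvu] at hs'
        exact v₁.mul_left_inj.mp hs'
      have hw : w₁ = w₂ := by
        have ht' : (v₁ : R) * w₁ = (v₂ : R) * w₂ := sub_left_injective ht
        rw [← hvu] at ht'
        exact v₁.mul_right_inj.mp ht'
      simp [hu, hvu, hw]
    · rintro ⟨⟨s, hs⟩, t⟩
      have hts : ¬ IsUnit (t * s) := fun h => hs (isUnit_of_mul_isUnit_right h)
      have hts1 : IsUnit (t * s - 1) := (isUnit_sub_one_iff hm1 _).mpr hts
      have hv : IsUnit ((t * s - 1) * ((x⁻¹ : Rˣ) : R)) := hts1.mul (x⁻¹).isUnit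
      set v : Rˣ := hv.unit with hvdef
      have hvv : (v : R) = (t * s - 1) * ((x⁻¹ : Rˣ) : R) := hv.unit_spec
      have hxv : (x : R) * v = t * s - 1 := by
        rw [hvv, mul_comm (t * s - 1) _, ← mul_assoc, Units.mul_inv, one_mul]
      have hs1 : IsUnit (s + 1) := (isUnit_add_one_iff hm1 s).mpr hs
      have hu : IsUnit ((s + 1) * ((v⁻¹ : Rˣ) : R)) := hs1.mul (v⁻¹).isUnit
      set u : Rˣ := hu.unit with hudef
      have huu : (u : R) = (s + 1) * ((v⁻¹ : Rˣ) : R) := hu.unit_spec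
      set w : R := (t + 1) * ((v⁻¹ : Rˣ) : R) with hwdef
      have huv : (u : R) * v - 1 = s := by
        rw [huu, mul_assoc, Units.inv_mul, mul_one, add_sub_cancel_right]
      have hvw : (v : R) * w - 1 = t := by
        rw [hwdef, mul_comm (t + 1) _, ← mul_assoc, Units.mul_inv, one_mul,
          add_sub_cancel_right]
      refine ⟨⟨⟨u, v, w⟩, ?_⟩, ?_⟩
      · show (((v : R) * w - 1) * ((u : R) * v - 1) - 1) * ((v⁻¹ : Rˣ) : R) = (x : R)
        rw [hvw, huv, ← hxv, mul_assoc, Units.mul_inv, mul_one]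
      · rw [hF]
        exact Prod.ext (Subtype.ext huv) hvw
  have hcard := Nat.card_eq_of_bijective F hbij
  rw [hcard]
  rw [Nat.card_prod, Nat.card_eq_fintype_card, Nat.card_eq_fintype_card,
    Fintype.card_subtype_compl, ZMod.card]
  have hcu : Fintype.card {z : R // IsUnit z} = Fintype.card Rˣ :=
    (Fintype.card_congr (unitsEquivIsUnit R)).symm
  rw [hcu, ZMod.card_units_eq_totient, Nat.totient_prime_pow Nat.prime_two (by omega)]
  have h1 : 2 ^ m - 2 ^ (m - 1) * (2 - 1) = 2 ^ (m - 1) := by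
    have : 2 ^ m = 2 ^ (m - 1) * 2 := by
      rw [← pow_succ]; congr 1; omega
    omega
  rw [h1, ← pow_add]
  congr 1
  omega
end

section
/- Let m ≥ 2, B ∈ SL_2(Z/2^m Z), n ≥ 3, and ε the class of -1. The set of n-tuples (a_1,...,a_n) in (Z/2^m Z)^n with M_n(a_1,...,a_n) = B and a_2 = -1 is in bijection with the set of (n-1)-tuples (b_1,...,b_{n-1}) with M_{n-1}(b_1,...,b_{n-1}) = -B; the bijection sends (a_1, -1, a_3, a_4, ..., a_n) to (a_1+1, a_3+1, a_4, ..., a_n). -/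
open Matrix
lemma key_s13 {A : Type*} [CommRing A] (c d : A) :
    matM c * (matM (-1) * matM d) = -(matM (c+1) * matM (d+1)) := by
  unfold matM
  ext i j
  fin_cases i <;> fin_cases j <;> simp [Matrix.mul_apply, Fin.sum_univ_two] <;> ring

lemma Mn_succ {A : Type*} [CommRing A] {n : ℕ} (a : Fin (n+1) → A) :
    Mn a = Mn (fun i => a i.succ) * matM (a 0) := by
  unfold Mn
  rw [List.ofFn_succ]
  simp

lemma Mn_expand3 {A : Type*} [CommRing A] {k : ℕ} (a : Fin (k+3) → A) :
    Mn a = Mn (fun i : Fin k => a ⟨i+3, by omega⟩) * matM (a ⟨2, by omega⟩) *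
      matM (a ⟨1, by omega⟩) * matM (a ⟨0, by omega⟩) := by
  rw [Mn_succ, Mn_succ, Mn_succ]
  have e1 : (fun i : Fin k => a i.succ.succ.succ) = (fun i : Fin k => a ⟨(i:ℕ)+3, by omega⟩) := by
    funext i; congr 1
  have e2 : (((0 : Fin (k+1)).succ).succ : Fin (k+3)) = ⟨2, by omega⟩ := by ext; simp
  have e3 : ((0 : Fin (k+2)).succ : Fin (k+3)) = ⟨1, by omega⟩ := by ext; simp
  have e4 : (0 : Fin (k+3)) = ⟨0, by omega⟩ := rfl
  simp only [e1, e2, e3, e4]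

lemma Mn_expand2 {A : Type*} [CommRing A] {k : ℕ} (b : Fin (k+2) → A) :
    Mn b = Mn (fun i : Fin k => b ⟨i+2, by omega⟩) * matM (b ⟨1, by omega⟩) *
      matM (b ⟨0, by omega⟩) := by
  rw [Mn_succ, Mn_succ]
  have e1 : (fun i : Fin k => b i.succ.succ) = (fun i : Fin k => b ⟨(i:ℕ)+2, by omega⟩) := by
    funext i; congr 1
  have e3 : ((0 : Fin (k+1)).succ : Fin (k+2)) = ⟨1, by omega⟩ := by ext; simp
  have e4 : (0 : Fin (k+2)) = ⟨0, by omega⟩ := rfl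
  simp only [e1, e3, e4]

theorem stmt13 (m : ℕ) (hm : 2 ≤ m) (B : Matrix (Fin 2) (Fin 2) (ZMod (2 ^ m)))
    (hB : B.det = 1) (n : ℕ) (hn : 3 ≤ n) :
    Set.BijOn
      (fun (a : Fin n → ZMod (2 ^ m)) (i : Fin (n - 1)) =>
        if (i : ℕ) = 0 then a ⟨0, by omega⟩ + 1
        else if (i : ℕ) = 1 then a ⟨2, by omega⟩ + 1
        else a ⟨(i : ℕ) + 1, by omega⟩)
      {a | Mn a = B ∧ a ⟨1, by omega⟩ = -1}
      {b | Mn b = -B} := by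
  obtain ⟨k, rfl⟩ : ∃ k, n = k + 3 := ⟨n - 3, by omega⟩
  have hkn : k + 3 - 1 = k + 2 := by omega
  let f : (Fin (k+3) → ZMod (2 ^ m)) → (Fin (k+2) → ZMod (2 ^ m)) := fun a i =>
        if (i : ℕ) = 0 then a ⟨0, by omega⟩ + 1
        else if (i : ℕ) = 1 then a ⟨2, by omega⟩ + 1
        else a ⟨(i : ℕ) + 1, by omega⟩
  let g : (Fin (k+2) → ZMod (2 ^ m)) → (Fin (k+3) → ZMod (2 ^ m)) := fun b i =>
        if (i : ℕ) = 0 then b ⟨0, by omega⟩ - 1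
        else if (i : ℕ) = 1 then -1
        else if (i : ℕ) = 2 then b ⟨1, by omega⟩ - 1
        else b ⟨(i : ℕ) - 1, by omega⟩
  have hMf : ∀ a : Fin (k+3) → ZMod (2 ^ m), a ⟨1, by omega⟩ = -1 → Mn (f a) = - Mn a := by
    intro a ha
    rw [Mn_expand3 a, Mn_expand2 (f a), ha]
    have t1 : (fun i : Fin k => f a ⟨(i:ℕ)+2, by omega⟩) =
        (fun i : Fin k => a ⟨(i:ℕ)+3, by omega⟩) := by
      funext i
      show (if (i:ℕ)+2 = 0 then _ else if (i:ℕ)+2 = 1 then _ else _) = _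
      rw [if_neg (by omega), if_neg (by omega)]
    have t2 : f a ⟨1, by omega⟩ = a ⟨2, by omega⟩ + 1 := rfl
    have t3 : f a ⟨0, by omega⟩ = a ⟨0, by omega⟩ + 1 := rfl
    have k2 := key_s13 (a ⟨2, by omega⟩) (a ⟨0, by omega⟩)
    rw [t1, t2, t3]
    simp only [mul_assoc, k2, mul_neg, neg_neg]
  have hgf : ∀ a : Fin (k+3) → ZMod (2 ^ m), a ⟨1, by omega⟩ = -1 → g (f a) = a := by
    intro a ha
    funext i
    rcases i with ⟨i, hi⟩
    match i with
    | 0 => show f a ⟨0, by omega⟩ - 1 = _ ; rw [show f a ⟨0, by omega⟩ = a ⟨0, by omega⟩ + 1 from rfl]; ring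
    | 1 => exact ha.symm
    | 2 => show f a ⟨1, by omega⟩ - 1 = _ ; rw [show f a ⟨1, by omega⟩ = a ⟨2, by omega⟩ + 1 from rfl]; ring
    | (j+3) =>
      show f a ⟨j+2, by omega⟩ = a ⟨j+3, hi⟩
      show (if j+2 = 0 then _ else if j+2 = 1 then _ else _) = _
      rw [if_neg (by omega), if_neg (by omega)]
  have hfg : ∀ b : Fin (k+2) → ZMod (2 ^ m), f (g b) = b := by
    intro b
    funext i
    rcases i with ⟨i, hi⟩
    match i with
    | 0 => show g b ⟨0, by omega⟩ + 1 = _ ; rw [show g b ⟨0, by omega⟩ = b ⟨0, by omega⟩ - 1 from rfl]; ring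
    | 1 => show g b ⟨2, by omega⟩ + 1 = _ ; rw [show g b ⟨2, by omega⟩ = b ⟨1, by omega⟩ - 1 from rfl]; ring
    | (j+2) =>
      show g b ⟨j+3, by omega⟩ = b ⟨j+2, hi⟩
      show (if j+3 = 0 then _ else if j+3 = 1 then _ else if j+3 = 2 then _ else _) = _
      rw [if_neg (by omega), if_neg (by omega), if_neg (by omega)]
      rfl
  have hg1 : ∀ b : Fin (k+2) → ZMod (2 ^ m), g b ⟨1, by omega⟩ = -1 := fun b => rfl
  have hMg : ∀ b : Fin (k+2) → ZMod (2 ^ m), Mn (g b) = - Mn b := by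
    intro b
    have h := hMf (g b) (hg1 b)
    rw [hfg b] at h
    rw [h, neg_neg]
  refine Set.InvOn.bijOn (f' := g) ⟨?_, ?_⟩ ?_ ?_
  · intro a ha
    exact hgf a ha.2
  · intro b _
    exact hfg b
  · intro a ha
    show Mn (f a) = -B
    rw [hMf a ha.2, ha.1]
  · intro b hb
    refine ⟨?_, hg1 b⟩
    rw [hMg b, Set.mem_setOf_eq.mp hb, neg_neg]
end

section
/- Let m ≥ 2, n ≥ 3, u ∈ U(m), and ε ∈ {1,-1}. The set of 2n-tuples (a_1,...,a_{2n}) with M_{2n}(a_1,...,a_{2n}) = ε·Id and a_2 = u is in bijection with the set of (2n-1)-tuples (b_1,...,b_{2n-1}) with M_{2n-1}(b_1,...,b_{2n-1}) = ε·Id, via (a_1,u,a_3,...,a_{2n}) ↦ (a_1·u - 1, a_3·u - 1, a_4·u^{-1}, a_5·u, ..., a_{2n}·u^{-1}). -/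
open Matrix
lemma Mn_eq_succ {A : Type*} [CommRing A] (k : ℕ) (hk : 1 ≤ k) (a : Fin k → A) :
    Mn a = matM (a ⟨k - 1, by omega⟩) * Mn (fun i : Fin (k - 1) => a ⟨i, by omega⟩) := by
  obtain ⟨n, rfl⟩ := Nat.exists_eq_succ_of_ne_zero (by omega : k ≠ 0)
  simp only [Mn, List.ofFn_succ', List.concat_eq_append, List.reverse_append, List.reverse_cons,
    List.reverse_nil, List.nil_append, List.cons_append, List.prod_cons]
  rfl

lemma sw1 {A : Type*} [CommRing A] (u : Aˣ) (c : A) :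
    matM (c * u) * !![1, 0; 0, (u : A)] = !![(u : A), 0; 0, 1] * matM c := by
  ext i j
  fin_cases i <;> fin_cases j <;>
    simp [matM, Matrix.mul_apply, Fin.sum_univ_two] <;> ring

lemma sw2 {A : Type*} [CommRing A] (u : Aˣ) (c : A) :
    matM (c * ((u⁻¹ : Aˣ) : A)) * !![(u : A), 0; 0, 1] = !![1, 0; 0, (u : A)] * matM c := by
  have hu : ((u⁻¹ : Aˣ) : A) * u = 1 := u.inv_mul
  ext i j
  fin_cases i <;> fin_cases j <;>
    simp [matM, Matrix.mul_apply, Fin.sum_univ_two] <;> linear_combination c * hu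

lemma key_s17 {A : Type*} [CommRing A] (u : Aˣ) (k : ℕ) (hk : 3 ≤ k)
    (a : Fin k → A) (b : Fin (k - 1) → A)
    (ha1 : a ⟨1, by omega⟩ = u)
    (hb0 : b ⟨0, by omega⟩ = a ⟨0, by omega⟩ * u - 1)
    (hb1 : b ⟨1, by omega⟩ = a ⟨2, by omega⟩ * u - 1)
    (hb : ∀ i : ℕ, 2 ≤ i → ∀ hi : i < k - 1,
      b ⟨i, hi⟩ = a ⟨i + 1, by omega⟩ * (if i % 2 = 1 then (u : A) else ((u⁻¹ : Aˣ) : A))) :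
    Mn b * !![1, 0; 0, (u : A)]
      = (if k % 2 = 1 then !![(u : A), 0; 0, 1] else !![1, 0; 0, (u : A)]) * Mn a := by
  induction k, hk using Nat.le_induction with
  | base =>
    have h2 : Mn b = matM (b ⟨1, by omega⟩) * matM (b ⟨0, by omega⟩) := by
      rw [Mn_eq_succ 2 (by omega), Mn_eq_succ 1 (by omega)]
      simp [Mn]
    have h3 : Mn a = matM (a ⟨2, by omega⟩) * (matM (a ⟨1, by omega⟩) * matM (a ⟨0, by omega⟩)) := by
      rw [Mn_eq_succ 3 (by omega), Mn_eq_succ 2 (by omega), Mn_eq_succ 1 (by omega)]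
      simp [Mn, mul_assoc]
    rw [h2, h3, hb0, hb1, ha1]
    ext i j
    fin_cases i <;> fin_cases j <;>
      (simp [matM, Matrix.mul_apply, Fin.sum_univ_two]; try ring)
  | succ k hk3 ih =>
    have hb' : Mn b = matM (b ⟨k - 1, by omega⟩)
        * Mn (fun i : Fin (k - 1) => b ⟨i, by omega⟩) := by
      have := Mn_eq_succ (k + 1 - 1) (by omega) b
      simpa using this
    have ha' : Mn a = matM (a ⟨k, by omega⟩)
        * Mn (fun i : Fin k => a ⟨i, by omega⟩) := by
      have := Mn_eq_succ (k + 1) (by omega) a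
      simpa using this
    have hih := ih (fun i : Fin k => a ⟨i, by omega⟩) (fun i : Fin (k - 1) => b ⟨i, by omega⟩)
      (by simpa using ha1) (by simpa using hb0) (by simpa using hb1)
      (fun i h2 hi => by simpa using hb i h2 (by omega))
    have hlast := hb (k - 1) (by omega) (by omega)
    rw [hb', mul_assoc, hih, ha']
    rcases Nat.mod_two_eq_zero_or_one k with hke | hko
    · have h1 : k % 2 = 1 → False := by omega
      have h2 : (k + 1) % 2 = 1 := by omega
      have h3 : (k - 1) % 2 = 1 := by omega
      simp only [if_neg h1, if_pos h2, if_pos h3] at hlast hih ⊢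
      rw [hlast, ← mul_assoc, sw1 u, mul_assoc]
      have : (⟨k - 1 + 1, by omega⟩ : Fin (k + 1)) = ⟨k, by omega⟩ := by
        apply Fin.ext; simp; omega
      rw [this]
    · have h1 : k % 2 = 1 := by omega
      have h2 : (k + 1) % 2 = 1 → False := by omega
      have h3 : (k - 1) % 2 = 1 → False := by omega
      simp only [if_pos h1, if_neg h2, if_neg h3] at hlast hih ⊢
      rw [hlast, ← mul_assoc, sw2 u, mul_assoc]
      have : (⟨k - 1 + 1, by omega⟩ : Fin (k + 1)) = ⟨k, by omega⟩ := by
        apply Fin.ext; simp; omega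
      rw [this]

theorem stmt17 (m : ℕ) (hm : 2 ≤ m) (n : ℕ) (hn : 3 ≤ n) (u : (ZMod (2 ^ m))ˣ)
    (ε : ZMod (2 ^ m)) (hε : ε = 1 ∨ ε = -1) :
    Set.BijOn
      (fun (a : Fin (2 * n) → ZMod (2 ^ m)) (i : Fin (2 * n - 1)) =>
        if (i : ℕ) = 0 then a ⟨0, by omega⟩ * u - 1
        else if (i : ℕ) = 1 then a ⟨2, by omega⟩ * u - 1
        else if (i : ℕ) % 2 = 1 then a ⟨(i : ℕ) + 1, by omega⟩ * u
        else a ⟨(i : ℕ) + 1, by omega⟩ * ((u⁻¹ : (ZMod (2 ^ m))ˣ) : ZMod (2 ^ m)))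
      {a | Mn a = ε • (1 : Matrix (Fin 2) (Fin 2) (ZMod (2 ^ m))) ∧ a ⟨1, by omega⟩ = u}
      {b | Mn b = ε • (1 : Matrix (Fin 2) (Fin 2) (ZMod (2 ^ m)))} := by
  set f : (Fin (2 * n) → ZMod (2 ^ m)) → Fin (2 * n - 1) → ZMod (2 ^ m) :=
    (fun (a : Fin (2 * n) → ZMod (2 ^ m)) (i : Fin (2 * n - 1)) =>
        if (i : ℕ) = 0 then a ⟨0, by omega⟩ * u - 1
        else if (i : ℕ) = 1 then a ⟨2, by omega⟩ * u - 1
        else if (i : ℕ) % 2 = 1 then a ⟨(i : ℕ) + 1, by omega⟩ * u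
        else a ⟨(i : ℕ) + 1, by omega⟩ * ((u⁻¹ : (ZMod (2 ^ m))ˣ) : ZMod (2 ^ m))) with hf
  set g : (Fin (2 * n - 1) → ZMod (2 ^ m)) → Fin (2 * n) → ZMod (2 ^ m) :=
    (fun (b : Fin (2 * n - 1) → ZMod (2 ^ m)) (i : Fin (2 * n)) =>
        if (i : ℕ) = 0 then (b ⟨0, by omega⟩ + 1) * ((u⁻¹ : (ZMod (2 ^ m))ˣ) : ZMod (2 ^ m))
        else if (i : ℕ) = 1 then (u : ZMod (2 ^ m))
        else if (i : ℕ) = 2 then (b ⟨1, by omega⟩ + 1) * ((u⁻¹ : (ZMod (2 ^ m))ˣ) : ZMod (2 ^ m))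
        else if (i : ℕ) % 2 = 0 then
          b ⟨(i : ℕ) - 1, by have := i.isLt; omega⟩ * ((u⁻¹ : (ZMod (2 ^ m))ˣ) : ZMod (2 ^ m))
        else b ⟨(i : ℕ) - 1, by have := i.isLt; omega⟩ * (u : ZMod (2 ^ m))) with hg
  have hcanc1 : ∀ x : ZMod (2 ^ m),
      x * ((u⁻¹ : (ZMod (2 ^ m))ˣ) : ZMod (2 ^ m)) * (u : ZMod (2 ^ m)) = x := fun x => by
    rw [mul_assoc, Units.inv_mul, mul_one]
  have hcanc2 : ∀ x : ZMod (2 ^ m),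
      x * (u : ZMod (2 ^ m)) * ((u⁻¹ : (ZMod (2 ^ m))ˣ) : ZMod (2 ^ m)) = x := fun x => by
    rw [mul_assoc, Units.mul_inv, mul_one]
  have hGD : (!![1, 0; 0, ((u⁻¹ : (ZMod (2 ^ m))ˣ) : ZMod (2 ^ m))] :
      Matrix (Fin 2) (Fin 2) (ZMod (2 ^ m))) * !![1, 0; 0, (u : ZMod (2 ^ m))] = 1 := by
    ext i j
    fin_cases i <;> fin_cases j <;>
      simp [Matrix.mul_apply, Fin.sum_univ_two, Matrix.one_apply]
  have hDG : (!![1, 0; 0, (u : ZMod (2 ^ m))] : Matrix (Fin 2) (Fin 2) (ZMod (2 ^ m)))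
      * !![1, 0; 0, ((u⁻¹ : (ZMod (2 ^ m))ˣ) : ZMod (2 ^ m))] = 1 := by
    ext i j
    fin_cases i <;> fin_cases j <;>
      simp [Matrix.mul_apply, Fin.sum_univ_two, Matrix.one_apply]
  have h2n : ¬ (2 * n) % 2 = 1 := by omega
  -- the three hypotheses of `key` for `f a`
  have hkeyf : ∀ a : Fin (2 * n) → ZMod (2 ^ m), a ⟨1, by omega⟩ = u →
      Mn (f a) * !![1, 0; 0, (u : ZMod (2 ^ m))]
        = !![1, 0; 0, (u : ZMod (2 ^ m))] * Mn a := by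
    intro a ha1
    have e0 : f a ⟨0, by omega⟩ = a ⟨0, by omega⟩ * (u : ZMod (2 ^ m)) - 1 := by
      rw [hf]; beta_reduce; rw [if_pos rfl]
    have e1 : f a ⟨1, by omega⟩ = a ⟨2, by omega⟩ * (u : ZMod (2 ^ m)) - 1 := by
      rw [hf]; beta_reduce; rw [if_neg (by (try simp only [Fin.val_mk]); omega), if_pos rfl]
    have e2 : ∀ i : ℕ, 2 ≤ i → ∀ hi : i < 2 * n - 1,
        f a ⟨i, hi⟩ = a ⟨i + 1, by omega⟩
          * (if i % 2 = 1 then (u : ZMod (2 ^ m))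
              else ((u⁻¹ : (ZMod (2 ^ m))ˣ) : ZMod (2 ^ m))) := by
      intro i h2 hi
      rcases Nat.mod_two_eq_zero_or_one i with hp | hp
      · rw [if_neg (by (try simp only [Fin.val_mk]); omega)]
        rw [hf]; beta_reduce
        rw [if_neg (by (try simp only [Fin.val_mk]); omega), if_neg (by (try simp only [Fin.val_mk]); omega), if_neg (by (try simp only [Fin.val_mk]); omega)]
      · rw [if_pos hp]
        rw [hf]; beta_reduce
        rw [if_neg (by (try simp only [Fin.val_mk]); omega), if_neg (by (try simp only [Fin.val_mk]); omega), if_pos hp]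
    have h := key_s17 u (2 * n) (by omega) a (f a) ha1 e0 e1 e2
    rwa [if_neg h2n] at h
  have hmapsf : Set.MapsTo f
      {a | Mn a = ε • (1 : Matrix (Fin 2) (Fin 2) (ZMod (2 ^ m))) ∧ a ⟨1, by omega⟩ = u}
      {b | Mn b = ε • (1 : Matrix (Fin 2) (Fin 2) (ZMod (2 ^ m)))} := by
    rintro a ⟨hMa, ha1⟩
    have h := hkeyf a ha1
    rw [hMa] at h
    show Mn (f a) = ε • (1 : Matrix (Fin 2) (Fin 2) (ZMod (2 ^ m)))
    calc Mn (f a)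
        = Mn (f a) * (!![1, 0; 0, (u : ZMod (2 ^ m))]
            * !![1, 0; 0, ((u⁻¹ : (ZMod (2 ^ m))ˣ) : ZMod (2 ^ m))]) := by rw [hDG, mul_one]
      _ = (Mn (f a) * !![1, 0; 0, (u : ZMod (2 ^ m))])
            * !![1, 0; 0, ((u⁻¹ : (ZMod (2 ^ m))ˣ) : ZMod (2 ^ m))] := by rw [mul_assoc]
      _ = (!![1, 0; 0, (u : ZMod (2 ^ m))] * (ε • 1))
            * !![1, 0; 0, ((u⁻¹ : (ZMod (2 ^ m))ˣ) : ZMod (2 ^ m))] := by rw [h]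
      _ = ε • (!![1, 0; 0, (u : ZMod (2 ^ m))]
            * !![1, 0; 0, ((u⁻¹ : (ZMod (2 ^ m))ˣ) : ZMod (2 ^ m))]) := by
          rw [mul_smul_comm, smul_mul_assoc, mul_one]
      _ = ε • 1 := by rw [hDG]
  have hmapsg : Set.MapsTo g {b | Mn b = ε • (1 : Matrix (Fin 2) (Fin 2) (ZMod (2 ^ m)))}
      {a | Mn a = ε • (1 : Matrix (Fin 2) (Fin 2) (ZMod (2 ^ m))) ∧ a ⟨1, by omega⟩ = u} := by
    intro b hMb
    have hg1 : g b ⟨1, by omega⟩ = (u : ZMod (2 ^ m)) := by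
      rw [hg]; beta_reduce; rw [if_neg (by (try simp only [Fin.val_mk]); omega), if_pos rfl]
    have e0 : b ⟨0, by omega⟩ = g b ⟨0, by omega⟩ * (u : ZMod (2 ^ m)) - 1 := by
      rw [hg]; beta_reduce
      rw [if_pos rfl, hcanc1]
      ring
    have e1 : b ⟨1, by omega⟩ = g b ⟨2, by omega⟩ * (u : ZMod (2 ^ m)) - 1 := by
      rw [hg]; beta_reduce
      rw [if_neg (by (try simp only [Fin.val_mk]); omega), if_neg (by (try simp only [Fin.val_mk]); omega), if_pos rfl, hcanc1]
      ring
    have e2 : ∀ i : ℕ, 2 ≤ i → ∀ hi : i < 2 * n - 1,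
        b ⟨i, hi⟩ = g b ⟨i + 1, by omega⟩
          * (if i % 2 = 1 then (u : ZMod (2 ^ m))
              else ((u⁻¹ : (ZMod (2 ^ m))ˣ) : ZMod (2 ^ m))) := by
      intro i h2 hi
      rcases Nat.mod_two_eq_zero_or_one i with hp | hp
      · rw [if_neg (by (try simp only [Fin.val_mk]); omega)]
        rw [hg]; beta_reduce
        rw [if_neg (by (try simp only [Fin.val_mk]); omega), if_neg (by (try simp only [Fin.val_mk]); omega), if_neg (by (try simp only [Fin.val_mk]); omega), if_neg (by (try simp only [Fin.val_mk]); omega), hcanc2]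
        exact congrArg b (by apply Fin.ext; show i = i + 1 - 1; omega)
      · rw [if_pos hp]
        rw [hg]; beta_reduce
        rw [if_neg (by (try simp only [Fin.val_mk]); omega), if_neg (by (try simp only [Fin.val_mk]); omega), if_neg (by (try simp only [Fin.val_mk]); omega), if_pos (by (try simp only [Fin.val_mk]); omega), hcanc1]
        exact congrArg b (by apply Fin.ext; show i = i + 1 - 1; omega)
    have h := key_s17 u (2 * n) (by omega) (g b) b hg1 e0 e1 e2
    rw [if_neg h2n, hMb] at h
    refine ⟨?_, hg1⟩
    calc Mn (g b)
        = (!![1, 0; 0, ((u⁻¹ : (ZMod (2 ^ m))ˣ) : ZMod (2 ^ m))]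
            * !![1, 0; 0, (u : ZMod (2 ^ m))]) * Mn (g b) := by rw [hGD, one_mul]
      _ = !![1, 0; 0, ((u⁻¹ : (ZMod (2 ^ m))ˣ) : ZMod (2 ^ m))]
            * ((ε • 1) * !![1, 0; 0, (u : ZMod (2 ^ m))]) := by rw [mul_assoc, ← h]
      _ = ε • (!![1, 0; 0, ((u⁻¹ : (ZMod (2 ^ m))ˣ) : ZMod (2 ^ m))]
            * !![1, 0; 0, (u : ZMod (2 ^ m))]) := by
          rw [smul_mul_assoc, one_mul, mul_smul_comm]
      _ = ε • 1 := by rw [hGD]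
  have hfg : ∀ b : Fin (2 * n - 1) → ZMod (2 ^ m), f (g b) = b := by
    intro b
    funext i
    rcases i with ⟨i, hi⟩
    rcases Nat.lt_or_ge i 2 with h3 | h3
    · obtain rfl | rfl : i = 0 ∨ i = 1 := by omega
      · rw [hf, hg]; beta_reduce
        rw [if_pos rfl, if_pos rfl, hcanc1]
        ring
      · rw [hf, hg]; beta_reduce
        rw [if_neg (by (try simp only [Fin.val_mk]); omega), if_pos rfl, if_neg (by (try simp only [Fin.val_mk]); omega), if_neg (by (try simp only [Fin.val_mk]); omega), if_pos rfl,
          hcanc1]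
        ring
    · rcases Nat.mod_two_eq_zero_or_one i with hp | hp
      · rw [hf, hg]; beta_reduce
        rw [if_neg (by (try simp only [Fin.val_mk]); omega), if_neg (by (try simp only [Fin.val_mk]); omega), if_neg (by (try simp only [Fin.val_mk]); omega), if_neg (by (try simp only [Fin.val_mk]); omega),
          if_neg (by (try simp only [Fin.val_mk]); omega), if_neg (by (try simp only [Fin.val_mk]); omega), if_neg (by (try simp only [Fin.val_mk]); omega), hcanc2]
        exact congrArg b (by apply Fin.ext; show i + 1 - 1 = i; omega)
      · rw [hf, hg]; beta_reduce
        rw [if_neg (by (try simp only [Fin.val_mk]); omega), if_neg (by (try simp only [Fin.val_mk]); omega), if_pos (by (try simp only [Fin.val_mk]); omega), if_neg (by (try simp only [Fin.val_mk]); omega),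
          if_neg (by (try simp only [Fin.val_mk]); omega), if_neg (by (try simp only [Fin.val_mk]); omega), if_pos (by (try simp only [Fin.val_mk]); omega), hcanc1]
        exact congrArg b (by apply Fin.ext; show i + 1 - 1 = i; omega)
  have hgf : ∀ a ∈ {a : Fin (2 * n) → ZMod (2 ^ m) |
      Mn a = ε • (1 : Matrix (Fin 2) (Fin 2) (ZMod (2 ^ m))) ∧ a ⟨1, by omega⟩ = u},
      g (f a) = a := by
    rintro a ⟨_, ha1⟩
    funext i
    rcases i with ⟨i, hi⟩
    rcases Nat.lt_or_ge i 3 with h3 | h3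
    · obtain rfl | rfl | rfl : i = 0 ∨ i = 1 ∨ i = 2 := by omega
      · rw [hg, hf]; beta_reduce
        rw [if_pos rfl, if_pos rfl,
          show a ⟨0, by omega⟩ * (u : ZMod (2 ^ m)) - 1 + 1
              = a ⟨0, by omega⟩ * (u : ZMod (2 ^ m)) from by ring, hcanc2]
      · rw [hg]; beta_reduce
        rw [if_neg (by (try simp only [Fin.val_mk]); omega), if_pos rfl]
        exact ha1.symm
      · rw [hg, hf]; beta_reduce
        rw [if_neg (by (try simp only [Fin.val_mk]); omega), if_neg (by (try simp only [Fin.val_mk]); omega), if_pos rfl, if_neg (by (try simp only [Fin.val_mk]); omega), if_pos rfl,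
          show a ⟨2, by omega⟩ * (u : ZMod (2 ^ m)) - 1 + 1
              = a ⟨2, by omega⟩ * (u : ZMod (2 ^ m)) from by ring, hcanc2]
    · rcases Nat.mod_two_eq_zero_or_one i with hp | hp
      · rw [hg, hf]; beta_reduce
        rw [if_neg (by (try simp only [Fin.val_mk]); omega), if_neg (by (try simp only [Fin.val_mk]); omega), if_neg (by (try simp only [Fin.val_mk]); omega), if_pos (by (try simp only [Fin.val_mk]); omega),
          if_neg (by (try simp only [Fin.val_mk]); omega), if_neg (by (try simp only [Fin.val_mk]); omega), if_pos (by (try simp only [Fin.val_mk]); omega), hcanc2]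
        exact congrArg a (by apply Fin.ext; show i - 1 + 1 = i; omega)
      · rw [hg, hf]; beta_reduce
        rw [if_neg (by (try simp only [Fin.val_mk]); omega), if_neg (by (try simp only [Fin.val_mk]); omega), if_neg (by (try simp only [Fin.val_mk]); omega), if_neg (by (try simp only [Fin.val_mk]); omega),
          if_neg (by (try simp only [Fin.val_mk]); omega), if_neg (by (try simp only [Fin.val_mk]); omega), if_neg (by (try simp only [Fin.val_mk]); omega), hcanc1]
        exact congrArg a (by apply Fin.ext; show i - 1 + 1 = i; omega)
  exact Set.InvOn.bijOn ⟨hgf, fun b _ => hfg b⟩ hmapsf hmapsg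
end
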